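/- arXiv:2507.07580 — 4 statements merged into one kernel-verified Lean document; each statement's English description precedes it below -/
import Mathlib

section
/- Let W be a real m×n matrix, X a real n×k matrix, and r a natural number. Let U_r be the m×r matrix whose columns are the first r left singular vectors of WX. Then W' = U_r U_rᵀ W has rank at most r and minimizes ‖WX − W'X‖_F over all m×n matrices W' of rank at most r. -/
/-!
Write `A = W * X`. For `W'` of rank at most `r`, let `P` be the orthogonal projection onto the
column space of `W' * X`. Since `(1 - P) * W' * X = 0`, we get
`‖A - W' * X‖ ≥ ‖(1 - P) * A‖`, and `‖(1 - P) * A‖² = tr (A Aᵀ) - tr (A Aᵀ P)` for every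
orthogonal projection `P`. With `A Aᵀ = U diag(s²) Uᵀ`, `tr (A Aᵀ P) = ∑ G i i * s i ^ 2` for the
projection `G = Uᵀ P U`, whose diagonal entries lie in `[0, 1]` and sum to `tr P ≤ r`. So
`tr (A Aᵀ P) ≤ s₀² + ⋯ + s_{r-1}²` (Ky Fan), and `P = U_r U_rᵀ` attains this bound.
-/

open Matrix BigOperators

noncomputable def frobNorm {α β : Type*} [Fintype α] [Fintype β]
    (A : Matrix α β ℝ) : ℝ :=
  Real.sqrt (∑ i, ∑ j, (A i j) ^ 2)

theorem IsStarProjection.star_mul_mul {R : Type*} [Monoid R] [StarMul R] {p u : R}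
    (hp : IsStarProjection p) (hu : u * star u = 1) : IsStarProjection (star u * p * u) where
  isIdempotentElem := by
    calc star u * p * u * (star u * p * u) = star u * (p * (u * star u) * p) * u := by
          simp only [mul_assoc]
      _ = star u * p * u := by rw [hu, mul_one, hp.isIdempotentElem.eq, mul_assoc]
  isSelfAdjoint := hp.isSelfAdjoint.conjugate' u

section RealMatrix

variable {ι κ : Type*} [Fintype ι] [Fintype κ]

theorem Matrix.trace_mul_transpose_self (A : Matrix ι κ ℝ) :
    (A * Aᵀ).trace = ∑ i, ∑ j, A i j ^ 2 := by
  simp [trace, mul_apply, sq]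

theorem Matrix.trace_mul_transpose_self_nonneg (A : Matrix ι κ ℝ) : 0 ≤ (A * Aᵀ).trace := by
  rw [trace_mul_transpose_self]
  positivity

theorem frobNorm_nonneg (A : Matrix ι κ ℝ) : 0 ≤ frobNorm A :=
  Real.sqrt_nonneg _

theorem frobNorm_eq_sqrt_trace (A : Matrix ι κ ℝ) : frobNorm A = √((A * Aᵀ).trace) := by
  rw [frobNorm, trace_mul_transpose_self]

theorem IsStarProjection.transpose_eq {P : Matrix ι ι ℝ} (hP : IsStarProjection P) : Pᵀ = P := by
  simpa [star_eq_conjTranspose] using hP.isSelfAdjoint.star_eq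

theorem IsStarProjection.diag_eq_sum_sq {P : Matrix ι ι ℝ} (hP : IsStarProjection P) (i : ι) :
    P i i = ∑ j, P i j ^ 2 := by
  conv_lhs => rw [← hP.isIdempotentElem.eq]
  simp only [mul_apply, sq]
  refine Finset.sum_congr rfl fun j _ => ?_
  rw [← transpose_apply P i j, hP.transpose_eq]

theorem IsStarProjection.diag_nonneg {P : Matrix ι ι ℝ} (hP : IsStarProjection P) (i : ι) :
    0 ≤ P i i := by
  rw [hP.diag_eq_sum_sq]
  positivity

theorem IsStarProjection.diag_le_one {P : Matrix ι ι ℝ} (hP : IsStarProjection P) (i : ι) :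
    P i i ≤ 1 := by
  have hsq : P i i ^ 2 ≤ P i i :=
    calc P i i ^ 2 ≤ ∑ j, P i j ^ 2 :=
          Finset.single_le_sum (fun j _ => sq_nonneg (P i j)) (Finset.mem_univ i)
      _ = P i i := (hP.diag_eq_sum_sq i).symm
  nlinarith [hP.diag_nonneg i]

theorem IsStarProjection.trace_mul_mul_transpose {Q : Matrix ι ι ℝ} (hQ : IsStarProjection Q)
    (M : Matrix ι κ ℝ) : (Q * M * (Q * M)ᵀ).trace = (M * Mᵀ * Q).trace := by
  rw [transpose_mul, hQ.transpose_eq, Matrix.mul_assoc, trace_mul_comm]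
  simp only [Matrix.mul_assoc, hQ.isIdempotentElem.eq]

theorem isStarProjection_mul_transpose_self [DecidableEq κ] {C : Matrix ι κ ℝ}
    (hC : Cᵀ * C = 1) : IsStarProjection (C * Cᵀ) := by
  refine ⟨?_, ?_⟩
  · rw [IsIdempotentElem, Matrix.mul_assoc, ← Matrix.mul_assoc Cᵀ, hC, Matrix.one_mul]
  · simp [IsSelfAdjoint, star_eq_conjTranspose]

variable [DecidableEq ι]

theorem IsStarProjection.frobNorm_mul_le {Q : Matrix ι ι ℝ} (hQ : IsStarProjection Q)
    (M : Matrix ι κ ℝ) : frobNorm (Q * M) ≤ frobNorm M := by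
  rw [frobNorm_eq_sqrt_trace, frobNorm_eq_sqrt_trace]
  refine Real.sqrt_le_sqrt ?_
  have h := hQ.one_sub.trace_mul_mul_transpose M
  rw [hQ.trace_mul_mul_transpose, Matrix.mul_sub, Matrix.mul_one, trace_sub] at *
  linarith [trace_mul_transpose_self_nonneg ((1 - Q) * M)]

theorem IsStarProjection.frobNorm_sub_mul_le {Q : Matrix ι ι ℝ} (hQ : IsStarProjection Q)
    {A B : Matrix ι κ ℝ} (hB : Q * B = B) : frobNorm (A - Q * A) ≤ frobNorm (A - B) := by
  have h : A - Q * A = (1 - Q) * (A - B) := by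
    rw [Matrix.sub_mul, Matrix.mul_sub, Matrix.mul_sub, hB]
    simp
  rw [h]
  exact hQ.one_sub.frobNorm_mul_le _

theorem IsStarProjection.frobNorm_sub_mul_sq {Q : Matrix ι ι ℝ} (hQ : IsStarProjection Q)
    (A : Matrix ι κ ℝ) : frobNorm (A - Q * A) ^ 2 = (A * Aᵀ).trace - (A * Aᵀ * Q).trace := by
  have h : A - Q * A = (1 - Q) * A := by rw [Matrix.sub_mul, Matrix.one_mul]
  rw [frobNorm_eq_sqrt_trace, Real.sq_sqrt (trace_mul_transpose_self_nonneg _), h,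
    hQ.one_sub.trace_mul_mul_transpose, Matrix.mul_sub, Matrix.mul_one, trace_sub]

theorem exists_isStarProjection_trace_eq_rank_mul_eq [DecidableEq κ] (B : Matrix ι κ ℝ) :
    ∃ P : Matrix ι ι ℝ, IsStarProjection P ∧ P.trace = B.rank ∧ P * B = B := by
  set S := LinearMap.range (toEuclideanLin B)
  set P := (toEuclideanCLM (𝕜 := ℝ) (n := ι)).symm S.starProjection
  have hSP : toEuclideanCLM (𝕜 := ℝ) P = S.starProjection := by simp [P]
  refine ⟨P, ?_, ?_, ?_⟩
  · set_option synthInstance.maxHeartbeats 200000 in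
    exact isStarProjection_starProjection.map (toEuclideanCLM (𝕜 := ℝ) (n := ι)).symm
  · have htrace : P.trace = LinearMap.trace ℝ _ (toEuclideanLin P) := by
      rw [LinearMap.trace_eq_matrix_trace ℝ (EuclideanSpace.basisFun ι ℝ).toBasis,
        toEuclideanLin_eq_toLin_orthonormal, LinearMap.toMatrix_toLin]
    have hrank : B.rank = Module.finrank ℝ S := by
      rw [rank_eq_finrank_range_toLin B (EuclideanSpace.basisFun ι ℝ).toBasis
        (EuclideanSpace.basisFun κ ℝ).toBasis, ← toEuclideanLin_eq_toLin_orthonormal]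
    have hproj := (LinearMap.IsIdempotentElem.isProj_range _
      (ContinuousLinearMap.IsIdempotentElem.toLinearMap S.isIdempotentElem_starProjection)).trace
    rw [htrace, hrank, ← coe_toEuclideanCLM_eq_toEuclideanLin, hSP, hproj,
      S.range_starProjection]
  · ext i j
    have hcol : toEuclideanLin B (WithLp.toLp 2 (Pi.single j 1)) ∈ S :=
      LinearMap.mem_range_self _ _
    have hfix := congrArg WithLp.ofLp ((S.starProjection_eq_self_iff).2 hcol)
    rw [← hSP] at hfix
    simpa [mulVec, dotProduct, mul_apply, Pi.single_apply] using congrFun hfix i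

end RealMatrix

theorem Fin.sum_ite_val_lt_eq_sum_castLE {M : Type*} [AddCommMonoid M] {m r : ℕ} (hr : r ≤ m)
    (f : Fin m → M) :
    ∑ i : Fin m, (if (i : ℕ) < r then f i else 0) = ∑ j : Fin r, f (Fin.castLE hr j) := by
  rw [← Finset.sum_filter]
  refine Eq.trans ?_ (Finset.sum_map Finset.univ (Fin.castLEEmb hr) f)
  congr 1
  ext i
  simp only [Finset.mem_filter, Finset.mem_univ, true_and, Finset.mem_map, Fin.castLEEmb_apply]
  exact ⟨fun h => ⟨⟨i, h⟩, rfl⟩, fun ⟨j, hj⟩ => hj ▸ j.isLt⟩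

theorem sum_mul_le_sum_castLE {m r : ℕ} (hr : r ≤ m) {a t : Fin m → ℝ} (ha : Antitone a)
    (ha0 : ∀ i, 0 ≤ a i) (ht0 : ∀ i, 0 ≤ t i) (ht1 : ∀ i, t i ≤ 1) (ht : ∑ i, t i ≤ r) :
    ∑ i, t i * a i ≤ ∑ j : Fin r, a (Fin.castLE hr j) := by
  -- `c` separates the `r` largest values of `a` from the others.
  set c : ℝ := if h : r < m then a ⟨r, h⟩ else 0 with hc
  have hc0 : 0 ≤ c := by
    rw [hc]
    split_ifs <;> simp [ha0]
  have hle : ∀ i : Fin m, t i * a i ≤ (if (i : ℕ) < r then a i - c else 0) + c * t i := by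
    intro i
    split_ifs with hi
    · have : c ≤ a i := by
        rw [hc]
        split_ifs with h
        · exact ha (Fin.le_def.2 hi.le)
        · exact ha0 i
      nlinarith [ht1 i]
    · have hrm : r < m := lt_of_le_of_lt (not_lt.1 hi) i.isLt
      have : a i ≤ c := by rw [hc, dif_pos hrm]; exact ha (Fin.le_def.2 (not_lt.1 hi))
      nlinarith [ht0 i]
  calc ∑ i, t i * a i ≤ ∑ i : Fin m, ((if (i : ℕ) < r then a i - c else 0) + c * t i) :=
        Finset.sum_le_sum fun i _ => hle i
    _ = ∑ j : Fin r, (a (Fin.castLE hr j) - c) + c * ∑ i, t i := by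
        rw [Finset.sum_add_distrib, Fin.sum_ite_val_lt_eq_sum_castLE hr (fun i => a i - c),
          Finset.mul_sum]
    _ ≤ ∑ j : Fin r, (a (Fin.castLE hr j) - c) + c * r := by gcongr
    _ = ∑ j : Fin r, a (Fin.castLE hr j) := by
        simp only [Finset.sum_sub_distrib, Finset.sum_const, Finset.card_univ, Fintype.card_fin,
          nsmul_eq_mul]
        ring

theorem trace_conj_diagonal_mul_le_sum_castLE {m r : ℕ} (hr : r ≤ m)
    {U : Matrix (Fin m) (Fin m) ℝ} (hU : Uᵀ * U = 1) {d : Fin m → ℝ} (hd : Antitone d)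
    (hd0 : ∀ i, 0 ≤ d i) {P : Matrix (Fin m) (Fin m) ℝ} (hP : IsStarProjection P)
    (htr : P.trace ≤ r) :
    (U * diagonal d * Uᵀ * P).trace ≤ ∑ j : Fin r, d (Fin.castLE hr j) := by
  have hstar : star U = Uᵀ := by rw [star_eq_conjTranspose, conjTranspose_eq_transpose_of_trivial]
  have hG : IsStarProjection (Uᵀ * P * U) :=
    hstar ▸ hP.star_mul_mul (hstar ▸ mul_eq_one_comm.1 hU)
  have htrace : (U * diagonal d * Uᵀ * P).trace = ∑ i, (Uᵀ * P * U) i i * d i := by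
    rw [show U * diagonal d * Uᵀ * P = U * (diagonal d * (Uᵀ * P)) by
      simp only [Matrix.mul_assoc], trace_mul_comm, Matrix.mul_assoc]
    simp [trace, mul_comm]
  have hGtr : ∑ i, (Uᵀ * P * U) i i = P.trace := by
    rw [show ∑ i, (Uᵀ * P * U) i i = (Uᵀ * P * U).trace from rfl, Matrix.mul_assoc,
      trace_mul_comm, Matrix.mul_assoc, mul_eq_one_comm.1 hU, Matrix.mul_one]
  rw [htrace]
  exact sum_mul_le_sum_castLE hr hd hd0 hG.diag_nonneg hG.diag_le_one (hGtr ▸ htr)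

section Submatrix

variable {ι κ : Type*} [Fintype ι]

theorem Matrix.submatrix_transpose_mul_mul (U M : Matrix ι ι ℝ) (f : κ → ι) :
    (Uᵀ * M * U).submatrix f f = (U.submatrix id f)ᵀ * M * U.submatrix id f := by
  rw [transpose_submatrix, ← submatrix_id_id M, ← submatrix_mul _ _ _ _ _ Function.bijective_id,
    ← submatrix_mul _ _ _ _ _ Function.bijective_id, submatrix_id_id]

variable [DecidableEq ι] [DecidableEq κ] {U : Matrix ι ι ℝ} {f : κ → ι}

theorem Matrix.transpose_mul_self_submatrix_id (hU : Uᵀ * U = 1) (hf : Function.Injective f) :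
    (U.submatrix id f)ᵀ * U.submatrix id f = 1 := by
  simpa [hU, submatrix_one f hf] using (submatrix_transpose_mul_mul U 1 f).symm

theorem trace_conj_diagonal_mul_submatrix_id [Fintype κ] (hU : Uᵀ * U = 1) (d : ι → ℝ)
    (hf : Function.Injective f) :
    (U * diagonal d * Uᵀ * (U.submatrix id f * (U.submatrix id f)ᵀ)).trace = ∑ j, d (f j) := by
  rw [← Matrix.mul_assoc, trace_mul_comm, ← Matrix.mul_assoc, ← submatrix_transpose_mul_mul]
  simp [← Matrix.mul_assoc, hU, Matrix.mul_assoc _ Uᵀ U, submatrix_diagonal d f hf, trace]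

end Submatrix

/-- For any `W`, `X`, and any orthogonal `U` whose columns are
eigenvectors of `(WX)(WX)ᵀ` with (squared) singular values `s` sorted in
decreasing order (i.e. the left singular vectors of `WX`), the matrix
`W' = U_r U_rᵀ W` (with `U_r` the first `r` columns of `U`) has rank at most `r`
and minimizes `‖WX − W'X‖_F` over all rank-`≤ r` matrices. -/
theorem stmt0 {m n k : ℕ} (r : ℕ) (hr : r ≤ m)
    (W : Matrix (Fin m) (Fin n) ℝ) (X : Matrix (Fin n) (Fin k) ℝ)
    (U : Matrix (Fin m) (Fin m) ℝ) (s : Fin m → ℝ)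
    (hU : Uᵀ * U = 1)
    (hsvd : (W * X) * (W * X)ᵀ = U * Matrix.diagonal (fun i => (s i) ^ 2) * Uᵀ)
    (hmono : Antitone s) (hpos : ∀ i, 0 ≤ s i)
    (Ur : Matrix (Fin m) (Fin r) ℝ)
    (hUr : Ur = U.submatrix id (Fin.castLE hr)) :
    (Ur * Urᵀ * W).rank ≤ r ∧
      ∀ W' : Matrix (Fin m) (Fin n) ℝ, W'.rank ≤ r →
        frobNorm (W * X - (Ur * Urᵀ * W) * X) ≤ frobNorm (W * X - W' * X) := by
  refine ⟨(rank_mul_le_left _ _).trans ((rank_mul_le_left _ _).trans (rank_le_width Ur)),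
    fun W' hW' => ?_⟩
  obtain ⟨P, hP, hPtr, hPB⟩ := exists_isStarProjection_trace_eq_rank_mul_eq (W' * X)
  have hP₀ : IsStarProjection (Ur * Urᵀ) := isStarProjection_mul_transpose_self
    (hUr ▸ transpose_mul_self_submatrix_id hU (Fin.castLE_injective hr))
  have hsq : Antitone fun i => s i ^ 2 := fun i j hij => pow_le_pow_left₀ (hpos j) (hmono hij) 2
  have hKyFan : (W * X * (W * X)ᵀ * P).trace ≤ ∑ j : Fin r, s (Fin.castLE hr j) ^ 2 :=
    hsvd ▸ trace_conj_diagonal_mul_le_sum_castLE hr hU hsq (fun i => sq_nonneg _) hP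
      (hPtr ▸ Nat.cast_le.2 ((rank_mul_le_left _ _).trans hW'))
  have htrunc : (W * X * (W * X)ᵀ * (Ur * Urᵀ)).trace = ∑ j : Fin r, s (Fin.castLE hr j) ^ 2 := by
    rw [hsvd, hUr, trace_conj_diagonal_mul_submatrix_id hU _ (Fin.castLE_injective hr)]
  rw [Matrix.mul_assoc _ W X]
  refine le_trans ?_ (hP.frobNorm_sub_mul_le hPB)
  rw [← pow_le_pow_iff_left₀ (frobNorm_nonneg _) (frobNorm_nonneg _) two_ne_zero,
    hP₀.frobNorm_sub_mul_sq, hP.frobNorm_sub_mul_sq]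
  linarith
end

section
/- Let X be an m×n real matrix with m ≤ n and rank(X) = m. Then ‖(XXᵀ)^{1/2} − (XXᵀ + μI)^{1/2}‖₂ ≤ μ/(2σ_m(X)), where σ_m(X) is the smallest singular value of X, μ > 0, and A^{1/2} denotes the unique positive semidefinite square root of a positive semidefinite symmetric matrix A. -/
/-!
In an orthonormal eigenbasis `P` of `XXᵀ = P diag(sᵢ²) Pᵀ` both square roots are diagonal,
`(XXᵀ)^{1/2} = P diag(sᵢ) Pᵀ` and `(XXᵀ + μI)^{1/2} = P diag(√(sᵢ² + μ)) Pᵀ`, so the spectral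
norm of their difference is `maxᵢ (√(sᵢ² + μ) − sᵢ)`. Each term equals
`μ / (√(sᵢ² + μ) + sᵢ) ≤ μ / (2sᵢ)`, which is largest for the smallest singular value;
full rank makes that value positive.
-/

open Matrix

noncomputable def specNorm {α β : Type*} [Fintype α] [Fintype β]
    (A : Matrix α β ℝ) : ℝ :=
  sSup ((fun x : β → ℝ => Real.sqrt (∑ i, (A.mulVec x i) ^ 2)) ''
    {x | ∑ j, (x j) ^ 2 = 1})

noncomputable def Matrix.PosSemidef.sqrt {n : Type*} [Fintype n] [DecidableEq n]
    {A : Matrix n n ℝ} (hA : A.PosSemidef) : Matrix n n ℝ :=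
  hA.1.eigenvectorUnitary.1 * diagonal ((↑) ∘ (√·) ∘ hA.1.eigenvalues) *
  (star hA.1.eigenvectorUnitary : Matrix n n ℝ)

lemma sqrt_sq_add_sub_le {s μ : ℝ} (hs : 0 < s) (hμ : 0 ≤ μ) :
    √(s ^ 2 + μ) - s ≤ μ / (2 * s) := by
  have hsq : √(s ^ 2 + μ) ^ 2 = s ^ 2 + μ := Real.sq_sqrt (by positivity)
  rw [le_div_iff₀ (by positivity)]
  nlinarith [sq_nonneg (√(s ^ 2 + μ) - s)]

lemma abs_sqrt_sq_sub_sqrt_sq_add_le {s μ : ℝ} (hs : 0 < s) (hμ : 0 ≤ μ) :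
    |√(s ^ 2) - √(s ^ 2 + μ)| ≤ μ / (2 * s) := by
  have hmono : √(s ^ 2) ≤ √(s ^ 2 + μ) := Real.sqrt_le_sqrt (by linarith)
  rw [abs_of_nonpos (by linarith), neg_sub, Real.sqrt_sq hs.le]
  exact sqrt_sq_add_sub_le hs hμ

section Spectral

variable {ι : Type*} [Fintype ι] [DecidableEq ι]

lemma Matrix.PosSemidef.sqrt_eq_of_sq_eq {A B : Matrix ι ι ℝ} (hA : A.PosSemidef)
    (hB : B.PosSemidef) (h : B ^ 2 = A) : hA.sqrt = B := by
  open scoped MatrixOrder in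
  have hcfc : hA.sqrt = cfc Real.sqrt A := by
    rw [hA.1.cfc_eq, IsHermitian.cfc, Unitary.conjStarAlgAut_apply]
    rfl
  rw [hcfc, ← cfcₙ_eq_cfc (hf0 := Real.sqrt_zero), ← CFC.sqrt_eq_real_sqrt A hA.nonneg]
  exact CFC.sqrt_unique (by rw [← h, pow_two]) hB.nonneg

lemma sum_sq_mulVec_of_transpose_mul_self_eq_one {Q : Matrix ι ι ℝ} (hQ : Qᵀ * Q = 1)
    (v : ι → ℝ) : ∑ i, (Q *ᵥ v) i ^ 2 = ∑ i, v i ^ 2 := by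
  have hdot : ∀ w : ι → ℝ, ∑ i, w i ^ 2 = w ⬝ᵥ w := fun w => by simp [dotProduct, pow_two]
  rw [hdot, hdot, dotProduct_mulVec, ← vecMul_transpose, vecMul_vecMul, hQ, vecMul_one]

variable {P : Matrix ι ι ℝ}

lemma conj_diagonal_sq (hP : Pᵀ * P = 1) (d : ι → ℝ) :
    (P * diagonal d * Pᵀ) ^ 2 = P * diagonal (fun i => d i ^ 2) * Pᵀ := by
  have hd : diagonal (fun i => d i ^ 2) = diagonal d * diagonal d := by
    rw [diagonal_mul_diagonal]; simp only [pow_two]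
  rw [pow_two, hd]
  calc P * diagonal d * Pᵀ * (P * diagonal d * Pᵀ)
      = P * diagonal d * (Pᵀ * P) * diagonal d * Pᵀ := by simp only [Matrix.mul_assoc]
    _ = P * (diagonal d * diagonal d) * Pᵀ := by
      rw [hP]; simp only [Matrix.mul_assoc, Matrix.mul_one]

lemma conj_diagonal_add_smul_one (hP : Pᵀ * P = 1) (d : ι → ℝ) (μ : ℝ) :
    P * diagonal d * Pᵀ + μ • 1 = P * diagonal (fun i => d i + μ) * Pᵀ := by
  have hPP : P * Pᵀ = 1 := mul_eq_one_comm.mp hP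
  have hdiag : diagonal (fun i => d i + μ) = diagonal d + μ • 1 := by
    rw [smul_one_eq_diagonal, diagonal_add]
  rw [hdiag, Matrix.mul_add, Matrix.add_mul, Matrix.mul_smul, Matrix.smul_mul, Matrix.mul_one, hPP]

lemma Matrix.PosSemidef.sqrt_eq_conj_diagonal {A : Matrix ι ι ℝ} (hA : A.PosSemidef)
    (hP : Pᵀ * P = 1) {d : ι → ℝ} (hd : ∀ i, 0 ≤ d i) (hspec : A = P * diagonal d * Pᵀ) :
    hA.sqrt = P * diagonal (fun i => √(d i)) * Pᵀ := by
  refine hA.sqrt_eq_of_sq_eq ?_ ?_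
  · have hD := posSemidef_diagonal_iff.mpr fun i => Real.sqrt_nonneg (d i)
    simpa using hD.mul_mul_conjTranspose_same P
  · rw [conj_diagonal_sq hP, hspec]
    simp only [Real.sq_sqrt (hd _)]

lemma ne_zero_of_rank_conj_diagonal_eq_card (hP : Pᵀ * P = 1) {d : ι → ℝ}
    (hrank : (P * diagonal d * Pᵀ).rank = Fintype.card ι) (i : ι) : d i ≠ 0 := by
  have hPPt : P * Pᵀ = 1 := mul_eq_one_comm.mp hP
  rw [rank_mul_eq_left_of_isUnit_det _ _ (isUnit_det_of_left_inverse hPPt),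
    rank_mul_eq_right_of_isUnit_det _ _ (isUnit_det_of_left_inverse hP), rank_diagonal] at hrank
  intro hi
  have hlt : Fintype.card {j // d j ≠ 0} < Fintype.card ι :=
    Fintype.card_subtype_lt (x := i) (by simp [hi])
  omega

lemma specNorm_le_of_sum_sq_mulVec_le {α β : Type*} [Fintype α] [Fintype β]
    {A : Matrix α β ℝ} {c : ℝ} (hc : 0 ≤ c)
    (h : ∀ x : β → ℝ, ∑ j, x j ^ 2 = 1 → ∑ i, (A *ᵥ x) i ^ 2 ≤ c ^ 2) : specNorm A ≤ c := by
  refine Real.sSup_le ?_ hc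
  rintro _ ⟨x, hx, rfl⟩
  calc √(∑ i, (A *ᵥ x) i ^ 2) ≤ √(c ^ 2) := Real.sqrt_le_sqrt (h x hx)
    _ = c := Real.sqrt_sq hc

lemma specNorm_conj_diagonal_le (hP : Pᵀ * P = 1) {d : ι → ℝ} {c : ℝ} (hc : 0 ≤ c)
    (hd : ∀ i, |d i| ≤ c) : specNorm (P * diagonal d * Pᵀ) ≤ c := by
  have hPt : Pᵀᵀ * Pᵀ = 1 := by rw [transpose_transpose, mul_eq_one_comm.mp hP]
  refine specNorm_le_of_sum_sq_mulVec_le hc fun x hx => ?_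
  have hy : ∑ i, (Pᵀ *ᵥ x) i ^ 2 = 1 := by
    rw [sum_sq_mulVec_of_transpose_mul_self_eq_one hPt, hx]
  calc ∑ i, ((P * diagonal d * Pᵀ) *ᵥ x) i ^ 2
      = ∑ i, d i ^ 2 * (Pᵀ *ᵥ x) i ^ 2 := by
        rw [← mulVec_mulVec, ← mulVec_mulVec, sum_sq_mulVec_of_transpose_mul_self_eq_one hP]
        simp only [mulVec_diagonal, mul_pow]
    _ ≤ ∑ i, c ^ 2 * (Pᵀ *ᵥ x) i ^ 2 := by
        refine Finset.sum_le_sum fun i _ => mul_le_mul_of_nonneg_right ?_ (sq_nonneg _)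
        exact sq_le_sq' (abs_le.mp (hd i)).1 (abs_le.mp (hd i)).2
    _ = c ^ 2 := by rw [← Finset.mul_sum, hy, mul_one]

end Spectral

/-- If `X` is `m×n` with `m ≤ n` and full row rank `m`, then
`‖(XXᵀ)^{1/2} − (XXᵀ + μI)^{1/2}‖₂ ≤ μ/(2σ_m(X))` for `μ > 0`, where `σ_m(X)`
is the smallest singular value of `X` (here given through a sorted spectral
decomposition of `XXᵀ`). -/
theorem stmt3 {m n : ℕ} (hm : 0 < m) (μ : ℝ) (hμ : 0 < μ)
    (X : Matrix (Fin m) (Fin n) ℝ) (hrank : X.rank = m)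
    (h1 : (X * Xᵀ).PosSemidef)
    (h2 : (X * Xᵀ + μ • (1 : Matrix (Fin m) (Fin m) ℝ)).PosSemidef)
    (P : Matrix (Fin m) (Fin m) ℝ) (s : Fin m → ℝ)
    (hP : Pᵀ * P = 1)
    (hspec : X * Xᵀ = P * Matrix.diagonal (fun i => (s i) ^ 2) * Pᵀ)
    (hmono : Antitone s) (hpos : ∀ i, 0 ≤ s i) :
    specNorm (Matrix.PosSemidef.sqrt h1 - Matrix.PosSemidef.sqrt h2) ≤ μ / (2 * s ⟨m - 1, by omega⟩) := by
  set σ := s ⟨m - 1, by omega⟩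
  have hσle : ∀ i, σ ≤ s i := fun i => hmono (Fin.le_def.mpr (Nat.le_sub_one_of_lt i.isLt))
  have hfull : (P * diagonal (fun i => s i ^ 2) * Pᵀ).rank = Fintype.card (Fin m) := by
    rw [← hspec, rank_self_mul_transpose, hrank, Fintype.card_fin]
  have hσpos : 0 < σ := (hpos _).lt_of_ne'
    ((pow_ne_zero_iff two_ne_zero).mp (ne_zero_of_rank_conj_diagonal_eq_card hP hfull _))
  have hsqrt1 := h1.sqrt_eq_conj_diagonal hP (fun i => sq_nonneg (s i)) hspec
  have hsqrt2 := h2.sqrt_eq_conj_diagonal hP (d := fun i => s i ^ 2 + μ) (fun i => by positivity)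
    (by rw [hspec, conj_diagonal_add_smul_one hP])
  rw [hsqrt1, hsqrt2, ← Matrix.sub_mul, ← Matrix.mul_sub, diagonal_sub]
  refine specNorm_conj_diagonal_le hP (by positivity) fun i => ?_
  calc |√(s i ^ 2) - √(s i ^ 2 + μ)| ≤ μ / (2 * s i) :=
        abs_sqrt_sq_sub_sqrt_sq_add_le (hσpos.trans_le (hσle i)) hμ.le
    _ ≤ μ / (2 * σ) := by gcongr; exact hσle i
end

section
/- Let W ∈ ℝ^{m×n}, let Λ = diag(λ₁,…,λ_n) be nonnegative diagonal with λ_max its largest entry, let B ∈ ℝ^{k×k} (embedded in the top-left block), and ε ≥ 0. Define A = W·blockdiag(Λ_k, 0) and Â = W·blockdiag(Λ_k + B, √ε I), where Λ_k is the top-left k×k block of Λ. Then ‖AAᵀ − ÂÂᵀ‖₂ ≤ ‖W‖₂²(2λ_max‖B‖₂ + max(‖B‖₂², ε)). -/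
open Matrix BigOperators

open scoped Matrix.Norms.L2Operator

lemma enorm_eq {α : Type*} [Fintype α] (v : α → ℝ) :
    ‖(WithLp.equiv 2 (α → ℝ)).symm v‖ = Real.sqrt (∑ i, v i ^ 2) := by
  rw [EuclideanSpace.norm_eq]; simp [Real.norm_eq_abs, sq_abs]

lemma mulVec_sqrt_le {α β : Type*} [Fintype α] [Fintype β] [DecidableEq β]
    (A : Matrix α β ℝ) (x : β → ℝ) :
    Real.sqrt (∑ i, (A.mulVec x i) ^ 2) ≤ ‖A‖ * Real.sqrt (∑ j, (x j) ^ 2) := by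
  have h := Matrix.l2_opNorm_mulVec A ((WithLp.equiv 2 (β → ℝ)).symm x)
  rw [enorm_eq] at h
  have : ((EuclideanSpace.equiv α ℝ).symm <| A *ᵥ (WithLp.equiv 2 (β → ℝ)).symm x) =
      (WithLp.equiv 2 (α → ℝ)).symm (A *ᵥ x) := rfl
  rw [this, enorm_eq] at h
  exact h

lemma opNorm_le_of_sqrt {α β : Type*} [Fintype α] [Fintype β] [DecidableEq β] (A : Matrix α β ℝ)
    {c : ℝ} (hc : 0 ≤ c)
    (h : ∀ x : β → ℝ, Real.sqrt (∑ i, (A.mulVec x i) ^ 2) ≤ c * Real.sqrt (∑ j, (x j) ^ 2)) :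
    ‖A‖ ≤ c := by
  rw [Matrix.l2_opNorm_def]
  refine ContinuousLinearMap.opNorm_le_bound _ hc fun y => ?_
  have h1 : ((toEuclideanLin.trans LinearMap.toContinuousLinearMap) A) y =
      (WithLp.equiv 2 (α → ℝ)).symm (A *ᵥ (WithLp.equiv 2 (β → ℝ)) y) := rfl
  have h2 : ‖y‖ = Real.sqrt (∑ j, ((WithLp.equiv 2 (β → ℝ)) y j) ^ 2) := by
    rw [show y = (WithLp.equiv 2 (β → ℝ)).symm ((WithLp.equiv 2 (β → ℝ)) y) by simp, enorm_eq]
    simp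
  rw [h1, enorm_eq, h2]
  exact h _

lemma specNorm_eq {α β : Type*} [Fintype α] [Fintype β] [DecidableEq β]
    (A : Matrix α β ℝ) : specNorm A = ‖A‖ := by
  classical
  unfold specNorm
  set S := ((fun x : β → ℝ => Real.sqrt (∑ i, (A.mulVec x i) ^ 2)) ''
    {x | ∑ j, (x j) ^ 2 = 1}) with hS
  have hub : ∀ y ∈ S, y ≤ ‖A‖ := by
    rintro - ⟨x, hx, rfl⟩
    have := mulVec_sqrt_le A x
    rw [Set.mem_setOf_eq.mp hx] at this
    simpa using this
  rcases isEmpty_or_nonempty β with hβ | hβ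
  · have hSe : S = ∅ := by
      rw [hS, Set.image_eq_empty]
      ext x
      simp [Finset.univ_eq_empty]
    rw [hSe, Real.sSup_empty]
    refine le_antisymm ?_ (norm_nonneg _) |>.symm
    refine opNorm_le_of_sqrt A le_rfl fun x => ?_
    simp [Matrix.mulVec, dotProduct]
  · have hSne : S.Nonempty := by
      obtain ⟨j₀⟩ := hβ
      refine ⟨_, ⟨Pi.single j₀ 1, ?_, rfl⟩⟩
      simp [Set.mem_setOf_eq, Pi.single_apply]
    have hbdd : BddAbove S := ⟨‖A‖, hub⟩
    refine le_antisymm (csSup_le hSne hub) ?_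
    have hs0 : 0 ≤ sSup S := by
      obtain ⟨y, hy⟩ := hSne
      have : 0 ≤ y := by rcases hy with ⟨x, -, rfl⟩; positivity
      exact this.trans (le_csSup hbdd hy)
    refine opNorm_le_of_sqrt A hs0 fun x => ?_
    by_cases hx0 : ∑ j, (x j) ^ 2 = 0
    · have hx : ∀ j, x j = 0 := by
        intro j
        have := (Finset.sum_eq_zero_iff_of_nonneg
          (fun j _ => sq_nonneg (x j))).mp hx0 j (Finset.mem_univ j)
        exact pow_eq_zero_iff (by norm_num) |>.mp this
      have : x = 0 := funext hx
      subst this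
      simp
    · set t := Real.sqrt (∑ j, (x j) ^ 2) with ht
      have htnn : 0 ≤ ∑ j, (x j) ^ 2 := Finset.sum_nonneg fun j _ => sq_nonneg _
      have ht0 : 0 < t := Real.sqrt_pos.mpr (lt_of_le_of_ne htnn (Ne.symm hx0))
      have hu : ∑ j, ((t⁻¹ • x) j) ^ 2 = 1 := by
        simp only [Pi.smul_apply, smul_eq_mul, mul_pow]
        rw [← Finset.mul_sum]
        rw [inv_pow, ht, Real.sq_sqrt htnn]
        exact inv_mul_cancel₀ hx0
      have hmem : Real.sqrt (∑ i, (A.mulVec (t⁻¹ • x) i) ^ 2) ∈ S := ⟨_, hu, rfl⟩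
      have hle := le_csSup hbdd hmem
      have heq : Real.sqrt (∑ i, (A.mulVec (t⁻¹ • x) i) ^ 2)
          = t⁻¹ * Real.sqrt (∑ i, (A.mulVec x i) ^ 2) := by
        rw [Matrix.mulVec_smul]
        simp only [Pi.smul_apply, smul_eq_mul, mul_pow]
        rw [← Finset.mul_sum, Real.sqrt_mul (by positivity), Real.sqrt_sq (by positivity)]
      rw [heq] at hle
      calc Real.sqrt (∑ i, (A.mulVec x i) ^ 2)
          = t * (t⁻¹ * Real.sqrt (∑ i, (A.mulVec x i) ^ 2)) := by field_simp
        _ ≤ t * sSup S := by nlinarith [Real.sqrt_nonneg (∑ i, (A.mulVec x i) ^ 2)]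
        _ = sSup S * t := mul_comm _ _

lemma sum_sq_le_of_sqrt {α β : Type*} [Fintype α] [Fintype β] [DecidableEq β]
    (A : Matrix α β ℝ) (x : β → ℝ) :
    ∑ i, (A.mulVec x i) ^ 2 ≤ ‖A‖ ^ 2 * ∑ j, (x j) ^ 2 := by
  have h := mulVec_sqrt_le A x
  have h1 : (∑ i, (A.mulVec x i) ^ 2) = (Real.sqrt (∑ i, (A.mulVec x i) ^ 2)) ^ 2 :=
    (Real.sq_sqrt (by positivity)).symm
  have h2 : (∑ j, (x j) ^ 2) = (Real.sqrt (∑ j, (x j) ^ 2)) ^ 2 :=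
    (Real.sq_sqrt (by positivity)).symm
  nlinarith [Real.sqrt_nonneg (∑ i, (A.mulVec x i) ^ 2), Real.sqrt_nonneg (∑ j, (x j) ^ 2),
    norm_nonneg A]

lemma blockdiag_norm_le {k l : Type*} [Fintype k] [DecidableEq k] [Fintype l] [DecidableEq l]
    (M₁ : Matrix k k ℝ) (M₂ : Matrix l l ℝ) :
    ‖Matrix.fromBlocks M₁ 0 0 M₂‖ ≤ max ‖M₁‖ ‖M₂‖ := by
  refine opNorm_le_of_sqrt _ (le_trans (norm_nonneg M₁) (le_max_left _ _)) fun x => ?_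
  set c := max ‖M₁‖ ‖M₂‖ with hc
  have hc0 : 0 ≤ c := le_trans (norm_nonneg M₁) (le_max_left _ _)
  have hx : x = Sum.elim (x ∘ Sum.inl) (x ∘ Sum.inr) := by
    ext (i | i) <;> rfl
  rw [hx, Matrix.fromBlocks_mulVec]
  simp only [Matrix.zero_mulVec, add_zero, zero_add]
  rw [Fintype.sum_sum_type, Fintype.sum_sum_type]
  simp only [Sum.elim_inl, Sum.elim_inr]
  have h1 := sum_sq_le_of_sqrt M₁ (x ∘ Sum.inl)
  have h2 := sum_sq_le_of_sqrt M₂ (x ∘ Sum.inr)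
  have hm1 : ‖M₁‖ ^ 2 ≤ c ^ 2 := by
    apply pow_le_pow_left₀ (norm_nonneg _) (le_max_left _ _)
  have hm2 : ‖M₂‖ ^ 2 ≤ c ^ 2 := by
    apply pow_le_pow_left₀ (norm_nonneg _) (le_max_right _ _)
  have hs1 : (0:ℝ) ≤ ∑ i, ((x ∘ Sum.inl) i) ^ 2 := by positivity
  have hs2 : (0:ℝ) ≤ ∑ i, ((x ∘ Sum.inr) i) ^ 2 := by positivity
  have key : (∑ i, (M₁.mulVec (x ∘ Sum.inl) i) ^ 2) + (∑ i, (M₂.mulVec (x ∘ Sum.inr) i) ^ 2)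
      ≤ c ^ 2 * ((∑ i, ((x ∘ Sum.inl) i) ^ 2) + ∑ i, ((x ∘ Sum.inr) i) ^ 2) := by
    nlinarith
  calc Real.sqrt ((∑ i, (M₁.mulVec (x ∘ Sum.inl) i) ^ 2) + ∑ i, (M₂.mulVec (x ∘ Sum.inr) i) ^ 2)
      ≤ Real.sqrt (c ^ 2 * ((∑ i, ((x ∘ Sum.inl) i) ^ 2) + ∑ i, ((x ∘ Sum.inr) i) ^ 2)) :=
        Real.sqrt_le_sqrt key
    _ = c * Real.sqrt ((∑ i, ((x ∘ Sum.inl) i) ^ 2) + ∑ i, ((x ∘ Sum.inr) i) ^ 2) := by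
        rw [Real.sqrt_mul (by positivity), Real.sqrt_sq hc0]

lemma diag_norm_le {k : Type*} [Fintype k] [DecidableEq k] (v : k → ℝ) {c : ℝ} (hc : 0 ≤ c)
    (h : ∀ i, |v i| ≤ c) : ‖Matrix.diagonal v‖ ≤ c := by
  refine opNorm_le_of_sqrt _ hc fun x => ?_
  simp only [Matrix.mulVec_diagonal]
  have key : ∑ i, (v i * x i) ^ 2 ≤ c ^ 2 * ∑ j, (x j) ^ 2 := by
    rw [Finset.mul_sum]
    refine Finset.sum_le_sum fun i _ => ?_
    have h2 : v i ^ 2 ≤ c ^ 2 := by nlinarith [sq_abs (v i), abs_nonneg (v i), h i]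
    calc (v i * x i) ^ 2 = v i ^ 2 * x i ^ 2 := by ring
      _ ≤ c ^ 2 * x i ^ 2 := mul_le_mul_of_nonneg_right h2 (sq_nonneg _)
  calc Real.sqrt (∑ i, (v i * x i) ^ 2) ≤ Real.sqrt (c ^ 2 * ∑ j, (x j) ^ 2) :=
        Real.sqrt_le_sqrt key
    _ = c * Real.sqrt (∑ j, (x j) ^ 2) := by rw [Real.sqrt_mul (by positivity), Real.sqrt_sq hc]

lemma transpose_norm_eq {α β : Type*} [Fintype α] [DecidableEq α] [Fintype β] [DecidableEq β]
    (A : Matrix α β ℝ) : ‖Aᵀ‖ = ‖A‖ := by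
  have : Aᵀ = Aᴴ := by ext i j; simp [Matrix.conjTranspose_apply]
  rw [this, Matrix.l2_opNorm_conjTranspose]

/-- With `Λ = diag d` nonnegative (largest entry `λmax`),
`B` a `k×k` block, `ε ≥ 0`, `A = W·blockdiag(Λ_k, 0)` and
`Â = W·blockdiag(Λ_k + B, √ε I)`, one has
`‖AAᵀ − ÂÂᵀ‖₂ ≤ ‖W‖₂²(2 λmax ‖B‖₂ + max(‖B‖₂², ε))`. -/
theorem stmt7 {m k l : ℕ} (ε : ℝ) (hε : 0 ≤ ε)
    (W : Matrix (Fin m) (Fin k ⊕ Fin l) ℝ)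
    (d : Fin k ⊕ Fin l → ℝ) (hd : ∀ i, 0 ≤ d i)
    (lammax : ℝ) (hmax : IsGreatest (Set.range d) lammax)
    (B : Matrix (Fin k) (Fin k) ℝ)
    (D Dhat : Matrix (Fin k ⊕ Fin l) (Fin k ⊕ Fin l) ℝ)
    (hD : D = Matrix.fromBlocks
      (Matrix.diagonal (fun i : Fin k => d (Sum.inl i))) 0 0 0)
    (hDhat : Dhat = Matrix.fromBlocks
      (Matrix.diagonal (fun i : Fin k => d (Sum.inl i)) + B) 0 0
      (Real.sqrt ε • (1 : Matrix (Fin l) (Fin l) ℝ))) :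
    specNorm ((W * D) * (W * D)ᵀ - (W * Dhat) * (W * Dhat)ᵀ) ≤
      specNorm W ^ 2 * (2 * lammax * specNorm B + max (specNorm B ^ 2) ε) := by
  classical
  rw [specNorm_eq, specNorm_eq, specNorm_eq]
  -- basic facts
  have hlam0 : 0 ≤ lammax := by
    obtain ⟨i, hi⟩ := hmax.1
    exact hi ▸ hd i
  set Λ : Matrix (Fin k) (Fin k) ℝ := Matrix.diagonal (fun i : Fin k => d (Sum.inl i)) with hΛdef
  have hΛt : Λᵀ = Λ := Matrix.diagonal_transpose _
  have hΛn : ‖Λ‖ ≤ lammax := by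
    refine diag_norm_le _ hlam0 fun i => ?_
    rw [abs_of_nonneg (hd _)]
    exact hmax.2 ⟨Sum.inl i, rfl⟩
  -- rewrite the matrix
  have hrw : (W * D) * (W * D)ᵀ - (W * Dhat) * (W * Dhat)ᵀ
      = W * ((D * Dᵀ) - (Dhat * Dhatᵀ)) * Wᵀ := by
    rw [Matrix.transpose_mul, Matrix.transpose_mul, Matrix.mul_sub, Matrix.sub_mul]
    simp [Matrix.mul_assoc]
  set E : Matrix (Fin k) (Fin k) ℝ := -(Λ * Bᵀ + B * Λ + B * Bᵀ) with hE
  have hmid : (D * Dᵀ) - (Dhat * Dhatᵀ)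
      = Matrix.fromBlocks E 0 0 (-(ε • (1 : Matrix (Fin l) (Fin l) ℝ))) := by
    subst hD hDhat
    simp only [Matrix.fromBlocks_transpose, Matrix.fromBlocks_multiply, Matrix.transpose_zero,
      Matrix.transpose_add, hΛt, Matrix.transpose_smul, Matrix.transpose_one,
      Matrix.mul_zero, Matrix.zero_mul, add_zero, zero_add, Matrix.smul_mul, Matrix.mul_smul,
      smul_smul, Real.mul_self_sqrt hε, Matrix.mul_one]
    ext (i | i) (j | j) <;>
      simp [Matrix.fromBlocks, hE, Matrix.add_mul, Matrix.mul_add, hΛt] <;> ring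
  -- norms
  have hBt : ‖Bᵀ‖ = ‖B‖ := transpose_norm_eq B
  have hEn : ‖E‖ ≤ 2 * lammax * ‖B‖ + ‖B‖ ^ 2 := by
    rw [hE, norm_neg]
    calc ‖Λ * Bᵀ + B * Λ + B * Bᵀ‖ ≤ ‖Λ * Bᵀ + B * Λ‖ + ‖B * Bᵀ‖ := norm_add_le _ _
      _ ≤ (‖Λ * Bᵀ‖ + ‖B * Λ‖) + ‖B * Bᵀ‖ := by gcongr; exact norm_add_le _ _
      _ ≤ (‖Λ‖ * ‖Bᵀ‖ + ‖B‖ * ‖Λ‖) + ‖B‖ * ‖Bᵀ‖ := by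
          gcongr <;> first
            | exact Matrix.l2_opNorm_mul _ _
      _ ≤ (lammax * ‖B‖ + ‖B‖ * lammax) + ‖B‖ * ‖B‖ := by
          rw [hBt]; gcongr <;> simp [norm_nonneg, hΛn]
      _ = 2 * lammax * ‖B‖ + ‖B‖ ^ 2 := by ring
  have hIn : ‖-(ε • (1 : Matrix (Fin l) (Fin l) ℝ))‖ ≤ ε := by
    have h1 : -(ε • (1 : Matrix (Fin l) (Fin l) ℝ))
        = Matrix.diagonal (fun _ : Fin l => -ε) := by
      ext i j
      by_cases h : i = j <;> simp [Matrix.one_apply, Matrix.diagonal_apply, h]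
    rw [h1]
    exact diag_norm_le _ hε fun i => by rw [abs_neg, abs_of_nonneg hε]
  have hmidn : ‖(D * Dᵀ) - (Dhat * Dhatᵀ)‖ ≤ 2 * lammax * ‖B‖ + max (‖B‖ ^ 2) ε := by
    rw [hmid]
    refine (blockdiag_norm_le _ _).trans ?_
    have hB0 : 0 ≤ ‖B‖ := norm_nonneg _
    refine max_le ?_ ?_
    · exact hEn.trans (by nlinarith [le_max_left (‖B‖ ^ 2) ε])
    · exact hIn.trans (by nlinarith [le_max_right (‖B‖ ^ 2) ε])
  -- combine
  rw [hrw]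
  calc ‖W * ((D * Dᵀ) - (Dhat * Dhatᵀ)) * Wᵀ‖
      ≤ ‖W * ((D * Dᵀ) - (Dhat * Dhatᵀ))‖ * ‖Wᵀ‖ := Matrix.l2_opNorm_mul _ _
    _ ≤ ‖W‖ * ‖(D * Dᵀ) - (Dhat * Dhatᵀ)‖ * ‖Wᵀ‖ :=
        mul_le_mul_of_nonneg_right (Matrix.l2_opNorm_mul _ _) (norm_nonneg _)
    _ = ‖W‖ ^ 2 * ‖(D * Dᵀ) - (Dhat * Dhatᵀ)‖ := by
        rw [transpose_norm_eq]; ring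
    _ ≤ ‖W‖ ^ 2 * (2 * lammax * ‖B‖ + max (‖B‖ ^ 2) ε) := by
        gcongr
end

section
/- Let X be a real n×k matrix partitioned by rows of its transpose into blocks X₀ᵀ, X₁ᵀ, …, X_pᵀ. Suppose each stage of the TSQR recursion produces QR factorizations with Q-factors having orthonormal columns. Then the final factor R obtained by sequentially QR-factoring the vertically stacked matrices satisfies RᵀR = XXᵀ, i.e., the resulting factorization is a valid QR decomposition of Xᵀ. -/
open Matrix

/-! If the stack `S` of the first blocks is `S = Q R₀` with `QᵀQ = 1` and `[R₀; B] = Q' R`, then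
`[S; B] = diag(Q, 1) [R₀; B] = (diag(Q, 1) Q') R`, and `diag(Q, 1) Q'` again has orthonormal
columns. Induction over the blocks gives `Xᵀ = Q R` with `QᵀQ = 1`, whence `RᵀR = X Xᵀ`. -/

namespace Matrix

variable {α : Type*} [CommSemiring α] {m m' n k : Type*} [Fintype m] [Fintype n] [DecidableEq n]

def HasOrthQR (X : Matrix m n α) (R : Matrix n n α) : Prop :=
  ∃ Q : Matrix m n α, Qᵀ * Q = 1 ∧ X = Q * R

theorem HasOrthQR.transpose_mul_self {X : Matrix m n α} {R : Matrix n n α} (h : HasOrthQR X R) :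
    Rᵀ * R = Xᵀ * X := by
  obtain ⟨Q, hQ, rfl⟩ := h
  rw [transpose_mul, Matrix.mul_assoc, ← Matrix.mul_assoc Qᵀ, hQ, Matrix.one_mul]

theorem HasOrthQR.submatrix_equiv [Fintype m'] {X : Matrix m n α} {R : Matrix n n α}
    (h : HasOrthQR X R) (e : m' ≃ m) : HasOrthQR (X.submatrix e id) R := by
  obtain ⟨Q, hQ, rfl⟩ := h
  refine ⟨Q.submatrix e id, ?_, ?_⟩
  · rw [transpose_submatrix, submatrix_mul_equiv, hQ, submatrix_id_id]
  · rw [← submatrix_id_id R, ← submatrix_mul _ _ _ _ _ Function.bijective_id, submatrix_id_id]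

omit [Fintype n] in
theorem transpose_mul_self_fromBlocks_one [DecidableEq k] [Fintype k] {Q : Matrix m n α}
    (hQ : Qᵀ * Q = 1) :
    (fromBlocks Q 0 0 (1 : Matrix k k α))ᵀ * fromBlocks Q 0 0 (1 : Matrix k k α) = 1 := by
  rw [fromBlocks_transpose, fromBlocks_multiply]
  simp [hQ]

theorem HasOrthQR.fromRows [Fintype k] [DecidableEq k] {X : Matrix m n α} {B : Matrix k n α}
    {R₀ R : Matrix n n α} (hX : HasOrthQR X R₀) (hstep : HasOrthQR (fromRows R₀ B) R) :
    HasOrthQR (fromRows X B) R := by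
  obtain ⟨Q, hQ, rfl⟩ := hX
  obtain ⟨Q', hQ', hA⟩ := hstep
  refine ⟨fromBlocks Q 0 0 (1 : Matrix k k α) * Q', ?_, ?_⟩
  · rw [transpose_mul, Matrix.mul_assoc, ← Matrix.mul_assoc _ (fromBlocks _ _ _ _),
      transpose_mul_self_fromBlocks_one hQ, Matrix.one_mul, hQ']
  · rw [Matrix.mul_assoc, ← hA, fromBlocks_mul_fromRows]
    simp

end Matrix

def finSuccProdEquiv (p : ℕ) (κ : Type*) : Fin (p + 2) × κ ≃ (Fin (p + 1) × κ) ⊕ κ :=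
  (finSuccEquivLast.prodCongr (Equiv.refl κ)).trans (optionProdEquiv.trans (Equiv.sumComm _ _))

section Stacking

variable {α : Type*} {κ n : Type*}

theorem of_uncurry_fin_one (B : Fin 1 → Matrix κ n α) :
    of (Function.uncurry B) = (B 0).submatrix (Equiv.uniqueProd κ (Fin 1)) id := by
  ext ⟨i, a⟩ j
  rw [Subsingleton.elim i 0]
  rfl

theorem of_uncurry_fin_succ {p : ℕ} (B : Fin (p + 2) → Matrix κ n α) :
    of (Function.uncurry B) =
      (fromRows (of (Function.uncurry (Fin.init B))) (B (Fin.last _))).submatrix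
        (finSuccProdEquiv p κ) id := by
  ext ⟨i, a⟩ j
  cases i using Fin.lastCases <;> simp [finSuccProdEquiv] <;> rfl

end Stacking

section TSQR

variable {α : Type*} [CommSemiring α] {κ n : Type*} [Fintype κ] [Fintype n] [DecidableEq n]
  [DecidableEq κ]

theorem hasOrthQR_tsqr {p : ℕ} (B : Fin (p + 1) → Matrix κ n α) (R : Fin (p + 1) → Matrix n n α)
    (h0 : HasOrthQR (B 0) (R 0))
    (hstep : ∀ i : Fin p, HasOrthQR (fromRows (R i.castSucc) (B i.succ)) (R i.succ)) :
    HasOrthQR (of (Function.uncurry B)) (R (Fin.last p)) := by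
  induction p with
  | zero =>
    rw [of_uncurry_fin_one]
    exact h0.submatrix_equiv _
  | succ p ih =>
    have hprev : HasOrthQR (of (Function.uncurry (Fin.init B))) (R (Fin.last p).castSucc) :=
      ih (Fin.init B) (Fin.init R) h0 fun i => hstep i.castSucc
    rw [of_uncurry_fin_succ]
    exact (hprev.fromRows (hstep (Fin.last p))).submatrix_equiv _

end TSQR

/-- TSQR correctness: Let `Xᵀ` be stacked from row blocks
`B 0, …, B p` (so `X` is `n×((p+1)·c)` with `Xᵀ` the vertical stack). Suppose
the sequential TSQR recursion produces triangular factors `R i` whose stages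
admit QR factorizations with orthonormal-column `Q`-factors:
`B 0 = Q₀ · R 0` and `[R i; B (i+1)] = Q_{i+1} · R (i+1)`. Then the final
factor satisfies `(R p)ᵀ (R p) = XXᵀ`, and the result is a valid QR
decomposition of `Xᵀ`: there is `Q` with orthonormal columns and
`Xᵀ = Q · (R p)`. -/
theorem stmt12 {n c p : ℕ}
    (B : Fin (p + 1) → Matrix (Fin c) (Fin n) ℝ)
    (R : Fin (p + 1) → Matrix (Fin n) (Fin n) ℝ)
    (Xt : Matrix (Fin (p + 1) × Fin c) (Fin n) ℝ)
    (hXt : ∀ (i : Fin (p + 1)) (a : Fin c) (j : Fin n), Xt (i, a) j = B i a j)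
    (h0 : ∃ Q0 : Matrix (Fin c) (Fin n) ℝ, Q0ᵀ * Q0 = 1 ∧ B 0 = Q0 * R 0)
    (hstep : ∀ i : Fin p,
      ∃ Qi : Matrix (Fin n ⊕ Fin c) (Fin n) ℝ, Qiᵀ * Qi = 1 ∧
        Matrix.fromRows (R i.castSucc) (B i.succ) = Qi * R i.succ) :
    (R (Fin.last p))ᵀ * R (Fin.last p) = Xtᵀ * Xt ∧
    ∃ Q : Matrix (Fin (p + 1) × Fin c) (Fin n) ℝ,
      Qᵀ * Q = 1 ∧ Xt = Q * R (Fin.last p) := by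
  have hstack : Xt = of (Function.uncurry B) := by
    ext ⟨i, a⟩ j
    exact hXt i a j
  have hQR : HasOrthQR Xt (R (Fin.last p)) := hstack ▸ hasOrthQR_tsqr B R h0 hstep
  exact ⟨hQR.transpose_mul_self, hQR⟩
end
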